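/- Define h(x) = √(2π) x e^{x²/2} ∫_{−∞}^{−x} (1/√(2π)) e^{−z²/2} dz = x e^{x²/2} ∫_x^∞ e^{−z²/2} dz. Then h is nondecreasing on (0, ∞). -/

import Mathlib

/-!
Writing `G(x) = ∫_x^∞ e^{-z²/2} dz`, one has `h'(x) = (1 + x²) e^{x²/2} G(x) - x`, so `h' ≥ 0` is
Gordon's lower bound `x / (1 + x²) · e^{-x²/2} ≤ G(x)`. The difference of its two sides has
derivative `-2 / (1 + x²)² · e^{-x²/2} ≤ 0` and tends to `0` at `+∞`, hence is nonnegative.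
-/

open Real MeasureTheory

noncomputable def h (x : ℝ) : ℝ :=
  x * Real.exp (x ^ 2 / 2) * ∫ z in Set.Ioi x, Real.exp (-z ^ 2 / 2)

open Filter Topology Set

section TailIntegral

variable {E : Type*} [NormedAddCommGroup E] [NormedSpace ℝ E] {f : ℝ → E}

theorem hasDerivAt_integral_Ioi [CompleteSpace E] (hf : Integrable f) (hc : Continuous f)
    (x : ℝ) : HasDerivAt (fun y ↦ ∫ z in Ioi y, f z) (-f x) x := by
  have tail_eq : ∀ y, ∫ z in Ioi y, f z = (∫ z in Ioi 0, f z) - ∫ z in 0..y, f z := fun y ↦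
    (sub_sub_cancel _ _).symm.trans
      (by rw [intervalIntegral.integral_Ioi_sub_Ioi' hf.integrableOn hf.integrableOn])
  rw [show (fun y ↦ ∫ z in Ioi y, f z) = _ from funext tail_eq]
  exact (intervalIntegral.integral_hasDerivAt_right (hc.intervalIntegrable _ _)
    hc.aestronglyMeasurable.stronglyMeasurableAtFilter hc.continuousAt).const_sub _

theorem tendsto_integral_Ioi_atTop (hf : Integrable f) :
    Tendsto (fun y ↦ ∫ z in Ioi y, f z) atTop (𝓝 0) := by
  have := tendsto_setIntegral_of_antitone (μ := volume) (f := f) (fun y ↦ measurableSet_Ioi)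
    (fun _ _ hab ↦ Ioi_subset_Ioi hab) ⟨0, hf.integrableOn⟩
  have iInter_Ioi : ⋂ y : ℝ, Ioi y = ∅ := iInter_eq_empty_iff.2 fun x ↦ ⟨x, lt_irrefl x⟩
  rwa [iInter_Ioi, Measure.restrict_empty, integral_zero_measure] at this

end TailIntegral

noncomputable def gaussianTail (x : ℝ) : ℝ := ∫ z in Ioi x, exp (-z ^ 2 / 2)

theorem integrable_exp_neg_sq_div_two : Integrable fun z : ℝ ↦ exp (-z ^ 2 / 2) := by
  convert integrable_exp_neg_mul_sq (b := (1 / 2 : ℝ)) (by norm_num) using 3 with z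
  ring

theorem exp_sq_div_two_mul_exp_neg_sq_div_two (x : ℝ) :
    exp (x ^ 2 / 2) * exp (-x ^ 2 / 2) = 1 := by
  rw [← exp_add, neg_div, add_neg_cancel, exp_zero]

theorem hasDerivAt_exp_neg_sq_div_two (x : ℝ) :
    HasDerivAt (fun z ↦ exp (-z ^ 2 / 2)) (-x * exp (-x ^ 2 / 2)) x := by
  have : HasDerivAt (fun z : ℝ ↦ -z ^ 2 / 2) (-x) x := by
    simpa [neg_div] using ((hasDerivAt_pow 2 x).div_const 2).fun_neg
  convert this.exp using 1
  ring

theorem tendsto_exp_neg_sq_div_two_atTop :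
    Tendsto (fun z : ℝ ↦ exp (-z ^ 2 / 2)) atTop (𝓝 0) := by
  simp_rw [neg_div]
  exact tendsto_exp_neg_atTop_nhds_zero.comp
    ((tendsto_pow_atTop two_ne_zero).atTop_div_const two_pos)

theorem hasDerivAt_gaussianTail (x : ℝ) :
    HasDerivAt gaussianTail (-exp (-x ^ 2 / 2)) x :=
  hasDerivAt_integral_Ioi integrable_exp_neg_sq_div_two (by fun_prop) x

theorem tendsto_gaussianTail_atTop : Tendsto gaussianTail atTop (𝓝 0) :=
  tendsto_integral_Ioi_atTop integrable_exp_neg_sq_div_two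

theorem div_one_add_sq_mul_exp_le_gaussianTail (x : ℝ) :
    x / (1 + x ^ 2) * exp (-x ^ 2 / 2) ≤ gaussianTail x := by
  set g : ℝ → ℝ := fun z ↦ z / (1 + z ^ 2) * exp (-z ^ 2 / 2)
  have hasDerivAt_g (z : ℝ) :
      HasDerivAt g ((1 - 2 * z ^ 2 - z ^ 4) / (1 + z ^ 2) ^ 2 * exp (-z ^ 2 / 2)) z := by
    have hz : 1 + z ^ 2 ≠ 0 := by positivity
    refine (((hasDerivAt_id' z).fun_div ((hasDerivAt_pow 2 z).const_add 1) hz).fun_mul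
      (hasDerivAt_exp_neg_sq_div_two z)).congr_deriv ?_
    field_simp
    ring
  have hasDerivAt_sub (z : ℝ) : HasDerivAt (fun z ↦ gaussianTail z - g z)
      (-(2 / (1 + z ^ 2) ^ 2 * exp (-z ^ 2 / 2))) z := by
    refine ((hasDerivAt_gaussianTail z).fun_sub (hasDerivAt_g z)).congr_deriv ?_
    field_simp
    ring
  have antitone_sub : Antitone fun z ↦ gaussianTail z - g z :=
    antitone_of_hasDerivAt_nonpos hasDerivAt_sub fun z ↦ neg_nonpos.2 (by positivity)
  have tendsto_g : Tendsto g atTop (𝓝 0) := by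
    refine tendsto_of_tendsto_of_tendsto_of_le_of_le' tendsto_const_nhds
      tendsto_exp_neg_sq_div_two_atTop ?_ ?_ <;>
      filter_upwards [eventually_ge_atTop 0] with z hz
    · positivity
    · have : z / (1 + z ^ 2) ≤ 1 := by
        rw [div_le_one (by positivity)]
        nlinarith
      simpa only [g, one_mul] using mul_le_mul_of_nonneg_right this (exp_pos _).le
  exact sub_nonneg.1 <|
    antitone_sub.le_of_tendsto (by simpa using tendsto_gaussianTail_atTop.sub tendsto_g) x

theorem hasDerivAt_h (x : ℝ) :
    HasDerivAt h ((1 + x ^ 2) * exp (x ^ 2 / 2) * gaussianTail x - x) x := by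
  have hexp : HasDerivAt (fun z ↦ exp (z ^ 2 / 2)) (x * exp (x ^ 2 / 2)) x := by
    convert ((hasDerivAt_pow 2 x).div_const 2).exp using 1
    ring
  refine (((hasDerivAt_id' x).fun_mul hexp).fun_mul (hasDerivAt_gaussianTail x)).congr_deriv ?_
  linear_combination -x * exp_sq_div_two_mul_exp_neg_sq_div_two x

theorem monotone_h : Monotone h := by
  refine monotone_of_hasDerivAt_nonneg hasDerivAt_h fun x ↦ sub_nonneg.2 ?_
  have hx : 1 + x ^ 2 ≠ 0 := by positivity
  calc x = (1 + x ^ 2) * exp (x ^ 2 / 2) * (x / (1 + x ^ 2) * exp (-x ^ 2 / 2)) := by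
        rw [mul_mul_mul_comm, ← mul_assoc, mul_div_cancel₀ x hx, mul_assoc,
          exp_sq_div_two_mul_exp_neg_sq_div_two, mul_one]
    _ ≤ (1 + x ^ 2) * exp (x ^ 2 / 2) * gaussianTail x := by
        gcongr
        exact div_one_add_sq_mul_exp_le_gaussianTail x

theorem stmt_14 : ∀ a b : ℝ, 0 < a → a ≤ b → h a ≤ h b :=
  fun _ _ _ hab ↦ monotone_h hab
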